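/- Let I ⊆ ℝ be an open interval and let x_n, ω_n : I → ℝ (n = 1,…,N) be differentiable with x_1(t) < ⋯ < x_N(t) for all t ∈ I, satisfying the multi-peakon system x_n′ = (1/2) Σ_k ω_k e^{−|x_n−x_k|}, ω_n′ = (1/2) Σ_k ω_n ω_k sgn(x_n−x_k) e^{−|x_n−x_k|} (with sgn(0)=0). Then the two quantities I₁(t) = Σ_{n=1}^N ω_n(t) and I₂(t) = (1/2) Σ_{n=1}^N Σ_{k=1}^N ω_n(t) ω_k(t) e^{−|x_n(t)−x_k(t)|} are constant on I. -/

import Mathlib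

/-!
`Σ ω_n'` is a double sum of the antisymmetric kernel `ω_n ω_k sgn(x_n - x_k) e^{-|x_n - x_k|}`,
so it vanishes. For `I₂`, differentiating and symmetrizing in `(n, k)` gives
`I₂' = 2 Σ_n (ω_n' u(x_n) - x_n' m_n)` for arbitrary velocities, where
`m_n = (1/2) Σ_k ω_n ω_k sgn(x_n - x_k) e^{-|x_n - x_k|}`; along the flow `x_n' = u(x_n)` and
`ω_n' = m_n`, so the two terms cancel. The strict ordering of the `x_n` keeps every
`x_n - x_k` with `n ≠ k` away from the kink of `|·|`.
-/

open Finset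

theorem hasDerivAt_abs_real_sign {a : ℝ} (ha : a ≠ 0) : HasDerivAt (|·|) (Real.sign a) a := by
  rcases ha.lt_or_gt with h | h
  · simpa [Real.sign_of_neg h] using hasDerivAt_abs_neg h
  · simpa [Real.sign_of_pos h] using hasDerivAt_abs_pos h

theorem HasDerivAt.exp_neg_abs {u : ℝ → ℝ} {u' t : ℝ} (hu : HasDerivAt u u' t) (h0 : u t ≠ 0) :
    HasDerivAt (fun σ => Real.exp (-|u σ|)) (-(Real.sign (u t) * u') * Real.exp (-|u t|)) t :=
  (((hasDerivAt_abs_real_sign h0).comp t hu).neg.exp).congr_deriv (mul_comm _ _)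

theorem Real.sign_sub_comm (a b : ℝ) : Real.sign (b - a) = -Real.sign (a - b) := by
  rw [← neg_sub, Real.sign_neg]

theorem Finset.sum_sum_eq_zero_of_antisymm {ι : Type*} (s : Finset ι) {f : ι → ι → ℝ}
    (hf : ∀ n k, f k n = -f n k) : ∑ n ∈ s, ∑ k ∈ s, f n k = 0 := by
  have h : ∑ n ∈ s, ∑ k ∈ s, f n k = ∑ k ∈ s, ∑ n ∈ s, -f k n :=
    sum_comm.trans (sum_congr rfl fun k _ => sum_congr rfl fun n _ => hf k n)
  simp only [sum_neg_distrib] at h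
  linarith

theorem Set.OrdConnected.eq_of_hasDerivAt_zero {I : Set ℝ} (hI : I.OrdConnected) {f : ℝ → ℝ}
    (hf : ∀ τ ∈ I, HasDerivAt f 0 τ) {s t : ℝ} (hs : s ∈ I) (ht : t ∈ I) : f s = f t := by
  have := Convex.norm_image_sub_le_of_norm_hasDerivWithin_le
    (fun τ hτ => (hf τ hτ).hasDerivWithinAt) (fun _ _ => norm_zero.le) hI.convex ht hs
  rwa [zero_mul, norm_le_zero_iff, sub_eq_zero] at this

section Peakon

variable {ι : Type*} (s : Finset ι) (X W : ι → ℝ)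

/-- `u(x_n)`. -/
noncomputable def peakonVelocity (n : ι) : ℝ :=
  (1 / 2) * ∑ k ∈ s, W k * Real.exp (-|X n - X k|)

/-- `-ω_n ū_x(x_n)`, where `ū_x` averages the one-sided derivatives of `u` at the peaks. -/
noncomputable def peakonForce (n : ι) : ℝ :=
  (1 / 2) * ∑ k ∈ s, W n * W k * Real.sign (X n - X k) * Real.exp (-|X n - X k|)

noncomputable def peakonEnergy : ℝ :=
  (1 / 2) * ∑ n ∈ s, ∑ k ∈ s, W n * W k * Real.exp (-|X n - X k|)

theorem sum_peakonForce_eq_zero : ∑ n ∈ s, peakonForce s X W n = 0 := by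
  simp only [peakonForce, ← mul_sum]
  rw [sum_sum_eq_zero_of_antisymm s fun n k => by
    rw [Real.sign_sub_comm, abs_sub_comm (X k)]; ring, mul_zero]

theorem peakonEnergy_deriv_eq (a b : ι → ℝ) :
    (1 / 2) * ∑ n ∈ s, ∑ k ∈ s, ((a n * W k + W n * a k) * Real.exp (-|X n - X k|) +
      W n * W k * (-(Real.sign (X n - X k) * (b n - b k)) * Real.exp (-|X n - X k|)))
      = 2 * ∑ n ∈ s, (a n * peakonVelocity s X W n - b n * peakonForce s X W n) := by
  set E : ι → ι → ℝ := fun n k => Real.exp (-|X n - X k|)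
  set S : ι → ι → ℝ := fun n k => Real.sign (X n - X k)
  have hswap_a : ∑ n ∈ s, ∑ k ∈ s, W n * a k * E n k = ∑ n ∈ s, ∑ k ∈ s, a n * W k * E n k :=
    sum_comm.trans <| sum_congr rfl fun n _ => sum_congr rfl fun k _ => by
      simp only [E, abs_sub_comm (X k)]; ring
  have hswap_b : ∑ n ∈ s, ∑ k ∈ s, W n * W k * S n k * b k * E n k
      = -∑ n ∈ s, ∑ k ∈ s, W n * W k * S n k * b n * E n k := by
    rw [← sum_neg_distrib]
    refine sum_comm.trans <| sum_congr rfl fun n _ => ?_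
    rw [← sum_neg_distrib]
    refine sum_congr rfl fun k _ => ?_
    simp only [S, E, abs_sub_comm (X k), Real.sign_sub_comm (X n)]; ring
  calc _ = (1 / 2) * (∑ n ∈ s, ∑ k ∈ s, a n * W k * E n k + ∑ n ∈ s, ∑ k ∈ s, W n * a k * E n k
          - ∑ n ∈ s, ∑ k ∈ s, W n * W k * S n k * b n * E n k
          + ∑ n ∈ s, ∑ k ∈ s, W n * W k * S n k * b k * E n k) := by
        simp only [← sum_add_distrib, ← sum_sub_distrib]
        congr 1
        exact sum_congr rfl fun n _ => sum_congr rfl fun k _ => by ring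
    _ = ∑ n ∈ s, ∑ k ∈ s, a n * W k * E n k
          - ∑ n ∈ s, ∑ k ∈ s, W n * W k * S n k * b n * E n k := by
        rw [hswap_a, hswap_b]; ring
    _ = _ := by
        simp only [peakonVelocity, peakonForce, mul_sum, ← sum_sub_distrib]
        exact sum_congr rfl fun n _ => sum_congr rfl fun k _ => by ring

variable {s} {x w : ι → ℝ → ℝ} {x' w' : ι → ℝ} {t : ℝ}

theorem hasDerivAt_exp_neg_abs_sub (hinj : Set.InjOn (x · t) s)
    (hx : ∀ n ∈ s, HasDerivAt (x n) (x' n) t) {n k : ι} (hn : n ∈ s) (hk : k ∈ s) :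
    HasDerivAt (fun σ => Real.exp (-|x n σ - x k σ|))
      (-(Real.sign (x n t - x k t) * (x' n - x' k)) * Real.exp (-|x n t - x k t|)) t := by
  by_cases hnk : n = k
  · -- the formula still holds here because `Real.sign 0 = 0`
    subst hnk
    simpa using hasDerivAt_const t (1 : ℝ)
  · exact ((hx n hn).sub (hx k hk)).exp_neg_abs (sub_ne_zero.mpr fun h => hnk (hinj hn hk h))

theorem hasDerivAt_peakonEnergy (hinj : Set.InjOn (x · t) s)
    (hx : ∀ n ∈ s, HasDerivAt (x n) (x' n) t) (hw : ∀ n ∈ s, HasDerivAt (w n) (w' n) t) :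
    HasDerivAt (fun σ => peakonEnergy s (x · σ) (w · σ))
      (2 * ∑ n ∈ s, (w' n * peakonVelocity s (x · t) (w · t) n
        - x' n * peakonForce s (x · t) (w · t) n)) t := by
  rw [← peakonEnergy_deriv_eq]
  refine (HasDerivAt.fun_sum fun n hn => HasDerivAt.fun_sum fun k hk => ?_).const_mul (1 / 2)
  exact ((hw n hn).fun_mul (hw k hk)).fun_mul (hasDerivAt_exp_neg_abs_sub hinj hx hn hk)

theorem hasDerivAt_sum_weights_of_peakon
    (hw : ∀ n ∈ s, HasDerivAt (w n) (peakonForce s (x · t) (w · t) n) t) :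
    HasDerivAt (fun σ => ∑ n ∈ s, w n σ) 0 t := by
  rw [← sum_peakonForce_eq_zero s (x · t) (w · t)]
  exact HasDerivAt.fun_sum hw

theorem hasDerivAt_peakonEnergy_of_peakon (hinj : Set.InjOn (x · t) s)
    (hx : ∀ n ∈ s, HasDerivAt (x n) (peakonVelocity s (x · t) (w · t) n) t)
    (hw : ∀ n ∈ s, HasDerivAt (w n) (peakonForce s (x · t) (w · t) n) t) :
    HasDerivAt (fun σ => peakonEnergy s (x · σ) (w · σ)) 0 t := by
  simpa [mul_comm] using hasDerivAt_peakonEnergy hinj hx hw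

end Peakon

theorem stmt_18_general (N : ℕ) (I : Set ℝ) (hIc : I.OrdConnected)
    (x w : ℕ → ℝ → ℝ)
    (hx : ∀ t ∈ I, ∀ i j, i < j → j < N → x i t < x j t)
    (hxd : ∀ t ∈ I, ∀ n, n < N → HasDerivAt (x n)
      ((1 / 2) * ∑ k ∈ Finset.range N, w k t * Real.exp (-|x n t - x k t|)) t)
    (hwd : ∀ t ∈ I, ∀ n, n < N → HasDerivAt (w n)
      ((1 / 2) * ∑ k ∈ Finset.range N,
        w n t * w k t * Real.sign (x n t - x k t) * Real.exp (-|x n t - x k t|)) t) :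
    ∀ s ∈ I, ∀ t ∈ I,
      (∑ n ∈ Finset.range N, w n s) = (∑ n ∈ Finset.range N, w n t) ∧
      (1 / 2) * ∑ n ∈ Finset.range N, ∑ k ∈ Finset.range N,
          w n s * w k s * Real.exp (-|x n s - x k s|)
        = (1 / 2) * ∑ n ∈ Finset.range N, ∑ k ∈ Finset.range N,
            w n t * w k t * Real.exp (-|x n t - x k t|) := by
  intro s hs t ht
  have hinj : ∀ τ ∈ I, Set.InjOn (x · τ) (range N) := fun τ hτ =>
    StrictMonoOn.injOn fun i _ j hj hij => hx τ hτ i j hij (mem_range.mp hj)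
  have hxd' : ∀ τ ∈ I, ∀ n ∈ range N, HasDerivAt (x n) (peakonVelocity _ (x · τ) (w · τ) n) τ :=
    fun τ hτ n hn => hxd τ hτ n (mem_range.mp hn)
  have hwd' : ∀ τ ∈ I, ∀ n ∈ range N, HasDerivAt (w n) (peakonForce _ (x · τ) (w · τ) n) τ :=
    fun τ hτ n hn => hwd τ hτ n (mem_range.mp hn)
  exact ⟨hIc.eq_of_hasDerivAt_zero
      (fun τ hτ => hasDerivAt_sum_weights_of_peakon (hwd' τ hτ)) hs ht,
    hIc.eq_of_hasDerivAt_zero (f := fun σ => peakonEnergy (range N) (x · σ) (w · σ))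
      (fun τ hτ => hasDerivAt_peakonEnergy_of_peakon (hinj τ hτ) (hxd' τ hτ) (hwd' τ hτ)) hs ht⟩

/-- the quantities `I₁ = Σ_n ω_n` and
`I₂ = (1/2) Σ_n Σ_k ω_n ω_k e^{-|x_n - x_k|}` are conserved along the multi-peakon flow. -/
theorem stmt_18 (N : ℕ) (I : Set ℝ) (hIo : IsOpen I) (hIc : I.OrdConnected)
    (x w : ℕ → ℝ → ℝ)
    (hx : ∀ t ∈ I, ∀ i j, i < j → j < N → x i t < x j t)
    (hxd : ∀ t ∈ I, ∀ n, n < N → HasDerivAt (x n)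
      ((1 / 2) * ∑ k ∈ Finset.range N, w k t * Real.exp (-|x n t - x k t|)) t)
    (hwd : ∀ t ∈ I, ∀ n, n < N → HasDerivAt (w n)
      ((1 / 2) * ∑ k ∈ Finset.range N,
        w n t * w k t * Real.sign (x n t - x k t) * Real.exp (-|x n t - x k t|)) t) :
    ∀ s ∈ I, ∀ t ∈ I,
      (∑ n ∈ Finset.range N, w n s) = (∑ n ∈ Finset.range N, w n t) ∧
      (1 / 2) * ∑ n ∈ Finset.range N, ∑ k ∈ Finset.range N,
          w n s * w k s * Real.exp (-|x n s - x k s|)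
        = (1 / 2) * ∑ n ∈ Finset.range N, ∑ k ∈ Finset.range N,
            w n t * w k t * Real.exp (-|x n t - x k t|) :=
  stmt_18_general N I hIc x w hx hxd hwd
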